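/- Let π be a noncrossing partition of {1,...,n} and K(π) its Kreweras complement. Then |π| + |K(π)| = n + 1, where |·| denotes the number of blocks. -/

import Mathlib

open Finset

/-- `x` and `y` lie in the same block of the partition `π`. -/
def SameBlock {α : Type*} [DecidableEq α] {s : Finset α} (π : Finpartition s)
    (x y : α) : Prop :=
  ∃ B ∈ π.parts, x ∈ B ∧ y ∈ B

/-- A partition of `{1,…,n}` (modelled on `Fin n`) is noncrossing if whenever
`a < b < c < d` with `a,c` in one block and `b,d` in one block, all four lie in a
common block. -/
def Noncrossing {n : ℕ} (π : Finpartition (univ : Finset (Fin n))) : Prop :=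
  ∀ a b c d : Fin n, a < b → b < c → c < d →
    SameBlock π a c → SameBlock π b d → SameBlock π a b

/-- The position of a point in the interleaved sequence `1,1',2,2',…,n,n'`:
`(i, false)` is the point `i+1` and `(i, true)` is the primed point `(i+1)'`. -/
def interPos {n : ℕ} (x : Fin n × Bool) : ℕ :=
  2 * x.1.val + (if x.2 then 1 else 0)

/-- Same-block relation for the union of a partition `π` of the unprimed points with a
partition `κ` of the primed points. -/
def UnionRel {n : ℕ} (π κ : Finpartition (univ : Finset (Fin n)))
    (x y : Fin n × Bool) : Prop :=
  x.2 = y.2 ∧ (if x.2 = true then SameBlock κ x.1 y.1 else SameBlock π x.1 y.1)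

/-- `π ∪ κ` is a noncrossing partition of the interleaved points `1,1',2,2',…,n,n'`. -/
def UnionNoncrossing {n : ℕ} (π κ : Finpartition (univ : Finset (Fin n))) : Prop :=
  ∀ a b c d : Fin n × Bool,
    interPos a < interPos b → interPos b < interPos c → interPos c < interPos d →
    UnionRel π κ a c → UnionRel π κ b d → UnionRel π κ a b

/-- `κ` is the Kreweras complement of `π`: it is the maximal partition of the primed
points `1',…,n'` such that `π ∪ κ` is noncrossing on the interleaved points. -/
def IsKreweras {n : ℕ} (π κ : Finpartition (univ : Finset (Fin n))) : Prop :=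
  UnionNoncrossing π κ ∧
    ∀ κ' : Finpartition (univ : Finset (Fin n)), UnionNoncrossing π κ' → κ' ≤ κ

/-!
Two primed points `i'`, `j'` lie in a common block of `K(π)` exactly when the chord joining
them cuts no block of `π`, i.e. every block of `π` lies entirely inside or entirely outside
`{x | i < x ≤ j}`. Count the blocks of `π` by their least elements and those of `K(π)` by
their greatest elements. For `1 ≤ i < n`, noncrossingness of `π` shows that `i + 1` is least
in its `π`-block iff some chord `i'k'` with `i < k` cuts no block of `π`, i.e. iff `i'` is not
greatest in its `K(π)`-block. Since `1` is always least and `n'` always greatest, the two counts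
add up to `(n - 1) + 2`.
-/

section SameBlock

variable {α : Type*} [DecidableEq α] {s : Finset α} {P Q : Finpartition s} {x y z : α}

theorem sameBlock_iff_mem_part : SameBlock P x y ↔ y ∈ P.part x := by
  rw [Finpartition.mem_part_iff_exists]
  exact exists_congr fun _ => and_congr_right fun _ => and_comm

theorem sameBlock_self (hx : x ∈ s) : SameBlock P x x :=
  sameBlock_iff_mem_part.2 (P.mem_part hx)

theorem SameBlock.symm (h : SameBlock P x y) : SameBlock P y x :=
  let ⟨B, hB, hx, hy⟩ := h
  ⟨B, hB, hy, hx⟩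

theorem SameBlock.trans (hxy : SameBlock P x y) (hyz : SameBlock P y z) : SameBlock P x z := by
  obtain ⟨B, hB, hxB, hyB⟩ := hxy
  obtain ⟨C, hC, hyC, hzC⟩ := hyz
  exact ⟨B, hB, hxB, P.eq_of_mem_parts hC hB hyC hyB ▸ hzC⟩

theorem SameBlock.mono (hPQ : P ≤ Q) (h : SameBlock P x y) : SameBlock Q x y := by
  obtain ⟨B, hB, hx, hy⟩ := h
  obtain ⟨C, hC, hBC⟩ := hPQ hB
  exact ⟨C, hC, hBC hx, hBC hy⟩

variable [LinearOrder α]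

def IsBlockMin (P : Finpartition s) (j : α) : Prop :=
  ∀ i, SameBlock P i j → j ≤ i

def IsBlockMax (P : Finpartition s) (j : α) : Prop :=
  ∀ k, SameBlock P j k → k ≤ j

theorem exists_greatest_sameBlock (hx : x ∈ s) :
    ∃ k, SameBlock P x k ∧ ∀ y, SameBlock P x y → y ≤ k :=
  have hne : (P.part x).Nonempty := P.part_nonempty.2 hx
  ⟨(P.part x).max' hne, sameBlock_iff_mem_part.2 (max'_mem _ _),
    fun _ hy => le_max' _ _ (sameBlock_iff_mem_part.1 hy)⟩

open Classical in
theorem card_parts_eq_card_filter_isBlockMin (P : Finpartition s) :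
    #P.parts = #{j ∈ s | IsBlockMin P j} := by
  refine card_bij (fun B hB => B.min' (P.nonempty_of_mem_parts hB)) ?_ ?_ ?_
  · intro B hB
    refine mem_filter.2 ⟨P.le hB (B.min'_mem _), ?_⟩
    rintro i ⟨C, hC, hiC, hmC⟩
    obtain rfl := P.eq_of_mem_parts hC hB hmC (B.min'_mem _)
    exact C.min'_le i hiC
  · intro B hB B' hB' h
    exact P.eq_of_mem_parts hB hB' (B.min'_mem _) (h ▸ B'.min'_mem _)
  · intro j hj
    obtain ⟨hjs, hmin⟩ := mem_filter.1 hj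
    obtain ⟨B, hB, hjB⟩ := P.exists_mem hjs
    exact ⟨B, hB, le_antisymm (B.min'_le j hjB) (hmin _ ⟨B, hB, B.min'_mem _, hjB⟩)⟩

open Classical in
theorem card_parts_eq_card_filter_isBlockMax (P : Finpartition s) :
    #P.parts = #{j ∈ s | IsBlockMax P j} := by
  refine card_bij (fun B hB => B.max' (P.nonempty_of_mem_parts hB)) ?_ ?_ ?_
  · intro B hB
    refine mem_filter.2 ⟨P.le hB (B.max'_mem _), ?_⟩
    rintro k ⟨C, hC, hmC, hkC⟩
    obtain rfl := P.eq_of_mem_parts hC hB hmC (B.max'_mem _)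
    exact C.le_max' k hkC
  · intro B hB B' hB' h
    exact P.eq_of_mem_parts hB hB' (B.max'_mem _) (h ▸ B'.max'_mem _)
  · intro j hj
    obtain ⟨hjs, hmax⟩ := mem_filter.1 hj
    obtain ⟨B, hB, hjB⟩ := P.exists_mem hjs
    exact ⟨B, hB, le_antisymm (hmax _ ⟨B, hB, hjB, B.max'_mem _⟩) (B.le_max' j hjB)⟩

end SameBlock

section Kreweras

variable {n : ℕ}

/-- The chord joining the primed points `i'` and `j'` separates the unprimed points `x` with
`min i j < x ≤ max i j` from the others. -/
def InArc (i j x : Fin n) : Prop :=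
  min i.val j.val < x.val ∧ x.val ≤ max i.val j.val

theorem inArc_comm (i j x : Fin n) : InArc i j x ↔ InArc j i x := by
  simp only [InArc, min_comm, max_comm]

def KrewerasRel (π : Finpartition (univ : Finset (Fin n))) (i j : Fin n) : Prop :=
  ∀ x y, SameBlock π x y → InArc i j x → InArc i j y

variable {π κ : Finpartition (univ : Finset (Fin n))} {i j k x y : Fin n}

theorem KrewerasRel.inArc_iff (h : KrewerasRel π i j) (hxy : SameBlock π x y) :
    InArc i j x ↔ InArc i j y :=
  ⟨h x y hxy, h y x hxy.symm⟩

theorem krewerasRel_refl (π : Finpartition (univ : Finset (Fin n))) (i : Fin n) :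
    KrewerasRel π i i := by
  intro x y _ hx
  simp only [InArc] at hx
  omega

theorem KrewerasRel.symm (h : KrewerasRel π i j) : KrewerasRel π j i := by
  intro x y hxy
  simpa only [inArc_comm] using h x y hxy

theorem KrewerasRel.trans (hij : KrewerasRel π i j) (hjk : KrewerasRel π j k) :
    KrewerasRel π i k := by
  intro x y hxy
  have := hij.inArc_iff hxy
  have := hjk.inArc_iff hxy
  simp only [InArc] at *
  omega

theorem KrewerasRel.of_cross {a b c d : Fin n} (hab : a < b) (hbc : b < c) (hcd : c < d)
    (hac : KrewerasRel π a c) (hbd : KrewerasRel π b d) : KrewerasRel π a b := by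
  intro x y hxy
  have := hac.inArc_iff hxy
  have := hbd.inArc_iff hxy
  simp only [InArc] at *
  omega

def krewerasSetoid (π : Finpartition (univ : Finset (Fin n))) : Setoid (Fin n) :=
  ⟨KrewerasRel π, ⟨krewerasRel_refl π, KrewerasRel.symm, KrewerasRel.trans⟩⟩

open Classical in
noncomputable def krewerasPartition (π : Finpartition (univ : Finset (Fin n))) :
    Finpartition (univ : Finset (Fin n)) :=
  Finpartition.ofSetoid (krewerasSetoid π)

open Classical in
theorem sameBlock_krewerasPartition :
    SameBlock (krewerasPartition π) i j ↔ KrewerasRel π i j := by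
  rw [sameBlock_iff_mem_part]
  exact Finpartition.mem_part_ofSetoid_iff_rel

@[simp]
theorem interPos_unprimed (x : Fin n) : interPos (x, false) = 2 * x.val := rfl

@[simp]
theorem interPos_primed (x : Fin n) : interPos (x, true) = 2 * x.val + 1 := rfl

@[simp]
theorem unionRel_unprimed : UnionRel π κ (x, false) (y, false) ↔ SameBlock π x y := by
  simp [UnionRel]

@[simp]
theorem unionRel_primed : UnionRel π κ (x, true) (y, true) ↔ SameBlock κ x y := by
  simp [UnionRel]

@[simp]
theorem not_unionRel_unprimed_primed : ¬UnionRel π κ (x, false) (y, true) := by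
  simp [UnionRel]

@[simp]
theorem not_unionRel_primed_unprimed : ¬UnionRel π κ (x, true) (y, false) := by
  simp [UnionRel]

theorem KrewerasRel.not_sameBlock (h : KrewerasRel π i j) (hx : InArc i j x)
    (hy : ¬InArc i j y) : ¬SameBlock π x y :=
  fun hxy => hy (h x y hxy hx)

theorem unionNoncrossing_krewerasPartition (hπ : Noncrossing π) :
    UnionNoncrossing π (krewerasPartition π) := by
  rintro ⟨a, _ | _⟩ ⟨b, _ | _⟩ ⟨c, _ | _⟩ ⟨d, _ | _⟩ hab hbc hcd hac hbd <;>
    simp only [interPos_unprimed, interPos_primed, unionRel_unprimed, unionRel_primed,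
      not_unionRel_unprimed_primed, not_unionRel_primed_unprimed,
      sameBlock_krewerasPartition] at hab hbc hcd hac hbd ⊢
  · exact hπ a b c d (by omega) (by omega) (by omega) hac hbd
  · exact hbd.not_sameBlock (by simp only [InArc]; omega) (by simp only [InArc]; omega) hac.symm
  · exact hac.not_sameBlock (by simp only [InArc]; omega) (by simp only [InArc]; omega) hbd
  · exact hac.of_cross (by omega) (by omega) (by omega) hbd

theorem krewerasRel_of_lt (hκ : UnionNoncrossing π κ) (hij : i < j) (h : SameBlock κ i j) :
    KrewerasRel π i j := by
  intro x y hxy hx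
  by_contra hy
  simp only [InArc] at hx hy
  rcases (by omega : y.val ≤ i.val ∨ j.val < y.val) with hyi | hjy
  · refine not_unionRel_unprimed_primed (hκ (y, false) (i, true) (x, false) (j, true) ?_ ?_ ?_
      (unionRel_unprimed.2 hxy.symm) (unionRel_primed.2 h)) <;>
    simp only [interPos_unprimed, interPos_primed] <;> omega
  · refine not_unionRel_primed_unprimed (hκ (i, true) (x, false) (j, true) (y, false) ?_ ?_ ?_
      (unionRel_primed.2 h) (unionRel_unprimed.2 hxy)) <;>
    simp only [interPos_unprimed, interPos_primed] <;> omega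

theorem krewerasRel_of_sameBlock (hκ : UnionNoncrossing π κ) (h : SameBlock κ i j) :
    KrewerasRel π i j := by
  rcases lt_trichotomy i j with hij | rfl | hji
  · exact krewerasRel_of_lt hκ hij h
  · exact krewerasRel_refl π i
  · exact (krewerasRel_of_lt hκ hji h.symm).symm

theorem IsKreweras.sameBlock_iff (hπ : Noncrossing π) (hκ : IsKreweras π κ) :
    SameBlock κ i j ↔ KrewerasRel π i j :=
  ⟨krewerasRel_of_sameBlock hκ.1, fun h =>
    (sameBlock_krewerasPartition.2 h).mono (hκ.2 _ (unionNoncrossing_krewerasPartition hπ))⟩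

theorem Noncrossing.sameBlock_of_lt_of_lt (hπ : Noncrossing π) {a b c e : Fin n}
    (hac : a < c) (hcb : c < b) (he : e < a ∨ b < e) (hab : SameBlock π a b)
    (hce : SameBlock π c e) : SameBlock π a c := by
  rcases he with hea | hbe
  · exact (hπ e a c b hea hac hcb hce.symm hab).symm.trans hce.symm
  · exact hπ a c b e hac hcb hbe hab hce

theorem isBlockMin_iff_exists_krewerasRel (hπ : Noncrossing π) (hij : j.val = i.val + 1) :
    IsBlockMin π j ↔ ∃ k, i < k ∧ KrewerasRel π i k := by
  constructor
  · intro hmin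
    obtain ⟨k, hjk, hk⟩ := exists_greatest_sameBlock (P := π) (mem_univ j)
    have hjk_le : j ≤ k := hk j (sameBlock_self (mem_univ j))
    refine ⟨k, by omega, fun x y hxy hx => ?_⟩
    simp only [InArc] at hx ⊢
    by_contra hy
    have hjx : SameBlock π j x := by
      rcases (show j ≤ x by omega).eq_or_lt with rfl | hjx
      · exact sameBlock_self (mem_univ j)
      rcases (show x ≤ k by omega).eq_or_lt with rfl | hxk
      · exact hjk
      exact hπ.sameBlock_of_lt_of_lt hjx hxk (by omega) hjk hxy
    have := hmin y (hjx.trans hxy).symm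
    have := hk y (hjx.trans hxy)
    omega
  · rintro ⟨k, hik, hk⟩ x hxj
    have := hk j x hxj.symm (by simp only [InArc]; omega)
    simp only [InArc] at this
    omega

theorem IsKreweras.isBlockMin_iff_not_isBlockMax (hπ : Noncrossing π) (hκ : IsKreweras π κ)
    (hij : j.val = i.val + 1) : IsBlockMin π j ↔ ¬IsBlockMax κ i := by
  simp only [isBlockMin_iff_exists_krewerasRel hπ hij, IsBlockMax, hκ.sameBlock_iff hπ,
    not_forall, not_le, exists_prop, and_comm]

end Kreweras

/-- If `π` is a noncrossing partition of `{1,…,n}` and `K(π)` its Kreweras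
complement, then `|π| + |K(π)| = n + 1`, where `|·|` is the number of blocks. -/
theorem stmt7 (n : ℕ) (hn : 0 < n)
    (π κ : Finpartition (univ : Finset (Fin n)))
    (hπ : Noncrossing π) (hκ : IsKreweras π κ) :
    π.parts.card + κ.parts.card = n + 1 := by
  obtain ⟨m, rfl⟩ : ∃ m, n = m + 1 := ⟨n - 1, by omega⟩
  classical
  have hsucc (i : Fin m) :
      (if IsBlockMin π i.succ then 1 else 0) + (if IsBlockMax κ i.castSucc then 1 else 0) =
        1 := by
    have := hκ.isBlockMin_iff_not_isBlockMax hπ (i := i.castSucc) (j := i.succ) (by simp)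
    split_ifs <;> tauto
  have hsum := sum_congr rfl fun i (_ : i ∈ univ) => hsucc i
  simp only [sum_add_distrib, sum_const, card_univ, Fintype.card_fin, smul_eq_mul,
    mul_one] at hsum
  have hmin_zero : IsBlockMin π 0 := fun i _ => Fin.zero_le i
  have hmax_last : IsBlockMax κ (Fin.last m) := fun k _ => Fin.le_last k
  rw [card_parts_eq_card_filter_isBlockMin, card_parts_eq_card_filter_isBlockMax, card_filter,
    card_filter, Fin.sum_univ_succ, Fin.sum_univ_castSucc, if_pos hmin_zero, if_pos hmax_last]
  omega
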